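/- The distribution law rewriting relation on microCCS processes is confluent (it is locally confluent and strongly normalising, hence confluent by Newman's lemma). -/
import Mathlib


/-- CCS visible actions: a name `a` or a coname `ā`. -/
inductive Act where
  | inp : ℕ → Act
  | out : ℕ → Act
deriving DecidableEq

/-- The coaction. -/
def Act.co : Act → Act
  | .inp a => .out a
  | .out a => .inp a

/-- MicroCCS processes: nil, prefix, parallel composition. -/
inductive Proc where
  | nil : Proc
  | pre : Act → Proc → Proc
  | par : Proc → Proc → Proc
deriving DecidableEq

/-- Transition labels: a visible action or τ. -/
inductive Lab where
  | act : Act → Lab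
  | tau : Lab
deriving DecidableEq

/-- The standard CCS labelled transition system on microCCS. -/
inductive Step : Proc → Lab → Proc → Prop where
  | pre (η : Act) (P : Proc) : Step (.pre η P) (.act η) P
  | syn {P P' Q Q' : Proc} {η : Act} :
      Step P (.act η) P' → Step Q (.act η.co) Q' →
      Step (.par P Q) .tau (.par P' Q')
  | parL {P P' : Proc} {μ : Lab} (Q : Proc) :
      Step P μ P' → Step (.par P Q) μ (.par P' Q)
  | parR {Q Q' : Proc} {μ : Lab} (P : Proc) :
      Step Q μ Q' → Step (.par P Q) μ (.par P Q')

/-- A (symmetric) bisimulation. -/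
def IsBisim (R : Proc → Proc → Prop) : Prop :=
  (∀ P Q, R P Q → R Q P) ∧
  ∀ P Q μ P', R P Q → Step P μ P' → ∃ Q', Step Q μ Q' ∧ R P' Q'

/-- Strong bisimilarity: the union of all bisimulations. -/
def Bisim (P Q : Proc) : Prop := ∃ R, IsBisim R ∧ R P Q

/-- The size of a process: its number of prefixes. -/
def Proc.size : Proc → ℕ
  | .nil => 0
  | .pre _ P => 1 + P.size
  | .par P Q => P.size + Q.size

/-- Structural congruence: abelian monoid laws for parallel composition. -/
inductive SC : Proc → Proc → Prop where
  | refl (P) : SC P P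
  | symm : SC P Q → SC Q P
  | trans : SC P Q → SC Q R → SC P R
  | comm (P Q) : SC (.par P Q) (.par Q P)
  | assoc (P Q R) : SC (.par P (.par Q R)) (.par (.par P Q) R)
  | unit (P) : SC (.par P .nil) P
  | pre (η) : SC P Q → SC (.pre η P) (.pre η Q)
  | par : SC P P' → SC Q Q' → SC (.par P Q) (.par P' Q')

/-- `pow P k` is the k-fold parallel composition of `P`. -/
def pow (P : Proc) : ℕ → Proc
  | 0 => .nil
  | n+1 => .par P (pow P n)

/-- One step of rewriting with the distribution law
    `η.(P ‖ (η.P)^k) ⇝ (η.P)^{k+1}` (k ≥ 1), modulo structural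
    congruence, in any context. -/
inductive RW : Proc → Proc → Prop where
  | head {η : Act} {P : Proc} {k : ℕ} (hk : 1 ≤ k) :
      RW (.pre η (.par P (pow (.pre η P) k))) (pow (.pre η P) (k+1))
  | pre (η) : RW P P' → RW (.pre η P) (.pre η P')
  | parL (Q) : RW P P' → RW (.par P Q) (.par P' Q)
  | parR (P) : RW Q Q' → RW (.par P Q) (.par P Q')
  | congr : SC P P₁ → RW P₁ P₂ → SC P₂ P' → RW P P'

/-- Reflexive-transitive closure of the distribution rewriting. -/
def Rws : Proc → Proc → Prop := Relation.ReflTransGen RW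

/-- Normal forms for the distribution rewriting. -/
def NF (P : Proc) : Prop := ¬ ∃ P', RW P P'

/-- Prime processes. -/
def IsPrime (P : Proc) : Prop :=
  ¬ Bisim P .nil ∧ ∀ Q R, Bisim P (.par Q R) → Bisim Q .nil ∨ Bisim R .nil


namespace ConflAux

/-- Fold a list of processes into a right-nested parallel composition. -/
def ltp (l : List Proc) : Proc := l.foldr .par .nil

/-- A canonical process representative of a multiset of processes. -/
noncomputable def mrepr (M : Multiset Proc) : Proc := ltp M.toList

/-- The decomposition condition for firing the distribution law at the head. -/
def Cond (η : Act) (L : Multiset Proc) (p : Multiset Proc × ℕ) : Prop :=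
  1 ≤ p.2 ∧ L = p.1 + p.2 • ({Proc.pre η (mrepr p.1)} : Multiset Proc)

-- Head normalization: fire the distribution law at the head if possible.
open Classical in
noncomputable def hd (η : Act) (L : Multiset Proc) : Multiset Proc :=
  if h : ∃ p, Cond η L p then
    (h.choose.2 + 1) • ({Proc.pre η (mrepr h.choose.1)} : Multiset Proc)
  else {Proc.pre η (mrepr L)}

/-- The canonical normal form of a process, as a multiset of components. -/
noncomputable def nrm : Proc → Multiset Proc
  | .nil => 0
  | .pre η P => hd η (nrm P)
  | .par P Q => nrm P + nrm Q

lemma ltp_inj : ∀ {l l' : List Proc}, ltp l = ltp l' → l = l' := by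
  intro l
  induction l with
  | nil =>
    intro l' h
    cases l' with
    | nil => rfl
    | cons x t => exact absurd h (by simp [ltp])
  | cons x t ih =>
    intro l' h
    cases l' with
    | nil => exact absurd h (by simp [ltp])
    | cons x' t' =>
      have h' : Proc.par x (ltp t) = Proc.par x' (ltp t') := h
      obtain ⟨h1, h2⟩ := Proc.par.inj h'
      rw [h1, ih h2]

lemma mrepr_inj {M M' : Multiset Proc} (h : mrepr M = mrepr M') : M = M' := by
  have := ltp_inj h
  rw [← Multiset.coe_toList M, ← Multiset.coe_toList M', this]

lemma size_ltp (l : List Proc) : (ltp l).size = (l.map Proc.size).sum := by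
  induction l with
  | nil => simp [ltp, Proc.size]
  | cons x t ih =>
    show (Proc.par x (ltp t)).size = _
    simp [Proc.size, ih]

lemma size_mrepr (M : Multiset Proc) :
    (mrepr M).size = (M.map Proc.size).sum := by
  have : (M.map Proc.size) = ((M.toList.map Proc.size : List ℕ) : Multiset ℕ) := by
    rw [← Multiset.map_coe, Multiset.coe_toList]
  rw [this, Multiset.sum_coe]
  exact size_ltp M.toList

lemma cond_unique {η : Act} {L : Multiset Proc} {p q : Multiset Proc × ℕ}
    (hp : Cond η L p) (hq : Cond η L q) : p = q := by
  obtain ⟨M, k⟩ := p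
  obtain ⟨M', k'⟩ := q
  obtain ⟨hk, hL⟩ := hp
  obtain ⟨hk', hL'⟩ := hq
  simp only at hL hL' hk hk' ⊢
  set x := Proc.pre η (mrepr M) with hxdef
  set x' := Proc.pre η (mrepr M') with hxdef'
  have hE : M + k • ({x} : Multiset Proc) = M' + k' • ({x'} : Multiset Proc) :=
    hL.symm.trans hL'
  by_cases hx : x = x'
  · have hMM : M = M' := mrepr_inj (Proc.pre.inj hx).2
    subst hMM
    rw [← hx] at hE
    have h2 : k • ({x} : Multiset Proc) = k' • ({x} : Multiset Proc) :=
      add_left_cancel hE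
    have h3 := congrArg Multiset.card h2
    simp at h3
    rw [h3]
  · exfalso
    have hx' : x' ≠ x := fun h => hx h.symm
    -- x' ∈ M
    have hmem1 : x' ∈ M := by
      have hc := congrArg (Multiset.count x') hE
      simp [Multiset.count_singleton, hx'] at hc
      have : 0 < Multiset.count x' M := by omega
      exact Multiset.count_pos.mp this
    have hmem2 : x ∈ M' := by
      have hc := congrArg (Multiset.count x) hE
      simp [Multiset.count_singleton, hx] at hc
      have : 0 < Multiset.count x M' := by omega
      exact Multiset.count_pos.mp this
    have hs1 : Proc.size x' ≤ (M.map Proc.size).sum :=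
      Multiset.single_le_sum (fun y _ => Nat.zero_le y) _
        (Multiset.mem_map_of_mem _ hmem1)
    have hs2 : Proc.size x ≤ (M'.map Proc.size).sum :=
      Multiset.single_le_sum (fun y _ => Nat.zero_le y) _
        (Multiset.mem_map_of_mem _ hmem2)
    have e1 : Proc.size x = 1 + (M.map Proc.size).sum := by
      rw [hxdef]; simp [Proc.size, size_mrepr]
    have e2 : Proc.size x' = 1 + (M'.map Proc.size).sum := by
      rw [hxdef']; simp [Proc.size, size_mrepr]
    omega

lemma hd_pos {η : Act} {L M : Multiset Proc} {k : ℕ} (h : Cond η L (M, k)) :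
    hd η L = (k + 1) • ({Proc.pre η (mrepr M)} : Multiset Proc) := by
  have he : ∃ p, Cond η L p := ⟨(M, k), h⟩
  unfold hd
  rw [dif_pos he]
  have hu := cond_unique he.choose_spec h
  rw [hu]

lemma hd_neg {η : Act} {L : Multiset Proc} (h : ¬ ∃ p, Cond η L p) :
    hd η L = {Proc.pre η (mrepr L)} := by
  unfold hd
  rw [dif_neg h]

lemma sc_perm {l l' : List Proc} (h : l.Perm l') : SC (ltp l) (ltp l') := by
  induction h with
  | nil => exact SC.refl _
  | cons x _ ih => exact SC.par (SC.refl x) ih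
  | swap x y t =>
    show SC (.par y (.par x (ltp t))) (.par x (.par y (ltp t)))
    exact SC.trans (SC.assoc _ _ _)
      (SC.trans (SC.par (SC.comm _ _) (SC.refl _)) (SC.symm (SC.assoc _ _ _)))
  | trans _ _ ih1 ih2 => exact SC.trans ih1 ih2

lemma sc_append (l₁ l₂ : List Proc) :
    SC (ltp (l₁ ++ l₂)) (.par (ltp l₁) (ltp l₂)) := by
  induction l₁ with
  | nil =>
    show SC (ltp l₂) (.par .nil (ltp l₂))
    exact SC.symm (SC.trans (SC.comm _ _) (SC.unit _))
  | cons x t ih =>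
    show SC (.par x (ltp (t ++ l₂))) (.par (.par x (ltp t)) (ltp l₂))
    exact SC.trans (SC.par (SC.refl x) ih) (SC.assoc _ _ _)

lemma sc_mrepr_add (A B : Multiset Proc) :
    SC (mrepr (A + B)) (.par (mrepr A) (mrepr B)) := by
  have hperm : (A + B).toList.Perm (A.toList ++ B.toList) := by
    rw [← Multiset.coe_eq_coe, ← Multiset.coe_add, Multiset.coe_toList,
      Multiset.coe_toList, Multiset.coe_toList]
  exact SC.trans (sc_perm hperm) (sc_append _ _)

lemma pow_ltp (x : Proc) (n : ℕ) : pow x n = ltp (List.replicate n x) := by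
  induction n with
  | zero => rfl
  | succ n ih =>
    show Proc.par x (pow x n) = Proc.par x (ltp (List.replicate n x))
    rw [ih]

lemma sc_mrepr_repl (x : Proc) (n : ℕ) :
    SC (mrepr (n • ({x} : Multiset Proc))) (pow x n) := by
  rw [pow_ltp]
  apply sc_perm
  rw [← Multiset.coe_eq_coe, Multiset.coe_toList, Multiset.coe_replicate,
    Multiset.nsmul_singleton]

lemma nrm_sc {P Q : Proc} (h : SC P Q) : nrm P = nrm Q := by
  induction h with
  | refl => rfl
  | symm _ ih => exact ih.symm
  | trans _ _ ih1 ih2 => exact ih1.trans ih2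
  | comm P Q => show nrm P + nrm Q = nrm Q + nrm P; exact add_comm _ _
  | assoc P Q R =>
    show nrm P + (nrm Q + nrm R) = nrm P + nrm Q + nrm R
    exact (add_assoc _ _ _).symm
  | unit P => show nrm P + 0 = nrm P; exact add_zero _
  | pre η _ ih => show hd η _ = hd η _; rw [ih]
  | par _ _ ih1 ih2 => show _ + _ = _ + _; rw [ih1, ih2]

lemma nrm_pow (X : Proc) (n : ℕ) : nrm (pow X n) = n • nrm X := by
  induction n with
  | zero => rfl
  | succ n ih =>
    show nrm X + nrm (pow X n) = (n + 1) • nrm X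
    rw [ih, succ_nsmul, add_comm]

lemma nrm_rw {P Q : Proc} (h : RW P Q) : nrm P = nrm Q := by
  induction h with
  | @head η P k hk =>
    show hd η (nrm P + nrm (pow (.pre η P) k)) = nrm (pow (.pre η P) (k+1))
    rw [nrm_pow, nrm_pow]
    show hd η (nrm P + k • hd η (nrm P)) = (k + 1) • hd η (nrm P)
    by_cases hc : ∃ p, Cond η (nrm P) p
    · obtain ⟨⟨M, j⟩, hcond⟩ := hc
      have hj : 1 ≤ j := hcond.1
      rw [hd_pos hcond]
      have h2 : Cond η
          (nrm P + k • (j + 1) • ({Proc.pre η (mrepr M)} : Multiset Proc))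
          (M, j + k * (j + 1)) := by
        refine ⟨by omega, ?_⟩
        simp only
        rw [hcond.2, smul_smul, add_assoc, ← add_smul]
      rw [hd_pos h2, smul_smul]
      congr 1
      ring
    · rw [hd_neg hc]
      have h2 : Cond η
          (nrm P + k • ({Proc.pre η (mrepr (nrm P))} : Multiset Proc))
          (nrm P, k) := ⟨hk, rfl⟩
      rw [hd_pos h2]
  | pre η _ ih => show hd η _ = hd η _; rw [ih]
  | parL Q _ ih => show _ + _ = _ + _; rw [ih]
  | parR P _ ih => show _ + _ = _ + _; rw [ih]
  | congr h1 _ h2 ih => rw [nrm_sc h1, ih, nrm_sc h2]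

lemma nrm_rws {P Q : Proc} (h : Rws P Q) : nrm P = nrm Q := by
  induction h with
  | refl => rfl
  | tail _ h2 ih => exact ih.trans (nrm_rw h2)

lemma rws_pre (η : Act) {P Q : Proc} (h : Rws P Q) :
    Rws (.pre η P) (.pre η Q) := by
  induction h with
  | refl => exact .refl
  | tail _ h2 ih => exact .tail ih (RW.pre η h2)

lemma rws_par {P Q P' Q' : Proc} (h1 : Rws P P') (h2 : Rws Q Q') :
    Rws (.par P Q) (.par P' Q') := by
  have hl : Rws (.par P Q) (.par P' Q) := by
    induction h1 with
    | refl => exact .refl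
    | tail _ hs ih => exact .tail ih (RW.parL _ hs)
  have hr : Rws (.par P' Q) (.par P' Q') := by
    induction h2 with
    | refl => exact .refl
    | tail _ hs ih => exact .tail ih (RW.parR _ hs)
  exact hl.trans hr

lemma reach : ∀ P : Proc, ∃ Q, Rws P Q ∧ SC Q (mrepr (nrm P)) := by
  intro P
  induction P with
  | nil =>
    refine ⟨.nil, .refl, ?_⟩
    show SC .nil (mrepr 0)
    have : mrepr (0 : Multiset Proc) = .nil := by
      simp [mrepr, ltp]
    rw [this]
    exact SC.refl _
  | par P₁ P₂ ih1 ih2 =>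
    obtain ⟨Q₁, hr1, hs1⟩ := ih1
    obtain ⟨Q₂, hr2, hs2⟩ := ih2
    exact ⟨.par Q₁ Q₂, rws_par hr1 hr2,
      SC.trans (SC.par hs1 hs2) (SC.symm (sc_mrepr_add _ _))⟩
  | pre η P ih =>
    obtain ⟨Q, hr, hs⟩ := ih
    by_cases hc : ∃ p, Cond η (nrm P) p
    · obtain ⟨⟨M, k⟩, hcond⟩ := hc
      have hk := hcond.1
      set x := Proc.pre η (mrepr M) with hxdef
      refine ⟨pow x (k + 1), ?_, ?_⟩
      · refine Relation.ReflTransGen.tail (rws_pre η hr) ?_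
        refine RW.congr ?_ (RW.head hk) (SC.refl _)
        refine SC.pre η (SC.trans hs ?_)
        have : nrm P = M + k • ({x} : Multiset Proc) := hcond.2
        rw [this]
        exact SC.trans (sc_mrepr_add _ _)
          (SC.par (SC.refl _) (sc_mrepr_repl _ _))
      · show SC (pow x (k + 1)) (mrepr (hd η (nrm P)))
        rw [hd_pos hcond]
        exact SC.symm (sc_mrepr_repl _ _)
    · refine ⟨.pre η Q, rws_pre η hr, ?_⟩
      show SC (.pre η Q) (mrepr (hd η (nrm P)))
      rw [hd_neg hc]
      have hms : mrepr ({Proc.pre η (mrepr (nrm P))} : Multiset Proc)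
          = .par (Proc.pre η (mrepr (nrm P))) .nil := by
        simp [mrepr, ltp]
      rw [hms]
      exact SC.trans (SC.pre η hs) (SC.symm (SC.unit _))

end ConflAux

/-- the distribution-law rewriting is confluent
    (joins are up to structural congruence). -/
theorem rw_confluent {P P₁ P₂ : Proc} (h₁ : Rws P P₁) (h₂ : Rws P P₂) :
    ∃ P₃ P₃', Rws P₁ P₃ ∧ Rws P₂ P₃' ∧ SC P₃ P₃' := by
  have e1 : ConflAux.nrm P₁ = ConflAux.nrm P := (ConflAux.nrm_rws h₁).symm
  have e2 : ConflAux.nrm P₂ = ConflAux.nrm P := (ConflAux.nrm_rws h₂).symm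
  obtain ⟨Q₁, hr1, hs1⟩ := ConflAux.reach P₁
  obtain ⟨Q₂, hr2, hs2⟩ := ConflAux.reach P₂
  refine ⟨Q₁, Q₂, hr1, hr2, SC.trans hs1 ?_⟩
  rw [e1, ← e2]
  exact SC.symm hs2
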